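/- In GLP, for worms A (iterated consistency statements built from ⊤ by prefixing diamonds ⟨β⟩), if A = ⟨n+1⟩B then for every k, Q^k_n(B) <_0 A, i.e. GLP ⊢ ⟨n+1⟩B → ⟨0⟩ Q^k_n(B). -/

import Mathlib

/-- Formulas of polymodal provability logic GLP_ω with modalities [n], n ∈ ℕ. -/
inductive GLPFormula : Type where
  | bot : GLPFormula
  | var : ℕ → GLPFormula
  | imp : GLPFormula → GLPFormula → GLPFormula
  | and : GLPFormula → GLPFormula → GLPFormula
  | box : ℕ → GLPFormula → GLPFormula

namespace GLPFormula

def neg (A : GLPFormula) : GLPFormula := imp A bot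
def top : GLPFormula := neg bot
def dia (n : ℕ) (A : GLPFormula) : GLPFormula := neg (box n (neg A))
def iff (A B : GLPFormula) : GLPFormula := and (imp A B) (imp B A)

/-- A formula is a propositional tautology if every boolean valuation commuting with
the propositional connectives (and arbitrary on boxes and variables) makes it true. -/
def IsTaut (A : GLPFormula) : Prop :=
  ∀ v : GLPFormula → Bool, v bot = false →
    (∀ B C, v (imp B C) = (!v B || v C)) →
    (∀ B C, v (and B C) = (v B && v C)) →
    v A = true

/-- Hilbert-style provability in GLP_ω. -/
inductive Proof : GLPFormula → Prop where
  | taut {A} : IsTaut A → Proof A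
  | k {n A B} : Proof ((box n (A.imp B)).imp ((box n A).imp (box n B)))
  | lob {n A} : Proof ((box n ((box n A).imp A)).imp (box n A))
  | mono {m n : ℕ} {A} : m ≤ n → Proof ((box m A).imp (box n A))
  | negIntro {m n : ℕ} {A} : m < n → Proof ((dia m A).imp (box n (dia m A)))
  | mp {A B} : Proof (A.imp B) → Proof A → Proof B
  | nec {n A} : Proof A → Proof (box n A)

/-- Q^0_n(φ) = ⟨n⟩φ, Q^{k+1}_n(φ) = ⟨n⟩(φ ∧ Q^k_n(φ)). -/
def Q (n : ℕ) (φ : GLPFormula) : ℕ → GLPFormula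
  | 0 => dia n φ
  | k + 1 => dia n (φ.and (Q n φ k))

/-- Worms: iterated consistency statements. -/
inductive IsWorm : GLPFormula → Prop where
  | top : IsWorm top
  | dia (n : ℕ) {A} : IsWorm A → IsWorm (dia n A)

end GLPFormula

open GLPFormula

/-! Induction on `k` gives `⟨n+1⟩B → Q^k_n(B)`: every `Q^k_n(B)` is an `⟨n⟩`-formula, so by
negative introspection `⟨n+1⟩B` also proves `[n+1]Q^k_n(B)`, and `⟨n+1⟩B ∧ [n+1]Q^k_n(B)` yields
`⟨n+1⟩(B ∧ Q^k_n(B))`, hence `Q^{k+1}_n(B)` by monotonicity. The theorem follows from the case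
`k+1` by weakening `⟨n⟩` to `⟨0⟩` and dropping the conjunct `B`. -/

namespace GLPFormula.Proof

variable {n : ℕ} {A B C : GLPFormula}

theorem trans (hAB : Proof (A.imp B)) (hBC : Proof (B.imp C)) : Proof (A.imp C) := by
  have taut : IsTaut ((A.imp B).imp ((B.imp C).imp (A.imp C))) := by
    intro v _ hi _
    simp only [hi]
    cases v A <;> cases v B <;> cases v C <;> rfl
  exact mp (mp (Proof.taut taut) hAB) hBC

theorem imp_and (hA : Proof (C.imp A)) (hB : Proof (C.imp B)) : Proof (C.imp (A.and B)) := by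
  have taut : IsTaut ((C.imp A).imp ((C.imp B).imp (C.imp (A.and B)))) := by
    intro v _ hi ha
    simp only [hi, ha]
    cases v A <;> cases v B <;> cases v C <;> rfl
  exact mp (mp (Proof.taut taut) hA) hB

theorem contrapose (h : Proof (A.imp B)) : Proof (B.neg.imp A.neg) := by
  have taut : IsTaut ((A.imp B).imp (B.neg.imp A.neg)) := by
    intro v hb hi _
    simp only [neg, hi, hb]
    cases v A <;> cases v B <;> rfl
  exact mp (Proof.taut taut) h

theorem imp_self : Proof (A.imp A) :=
  Proof.taut fun v _ hi _ => by simp only [hi]; cases v A <;> rfl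

theorem and_imp_right : Proof ((A.and B).imp B) := by
  refine Proof.taut fun v _ hi ha => ?_
  simp only [hi, ha]
  cases v A <;> cases v B <;> rfl

theorem box_imp_box (h : Proof (A.imp B)) : Proof ((box n A).imp (box n B)) :=
  mp k (nec h)

theorem dia_imp_dia (h : Proof (A.imp B)) : Proof ((dia n A).imp (dia n B)) :=
  contrapose (box_imp_box (contrapose h))

theorem dia_imp_dia_of_le {m : ℕ} (h : m ≤ n) : Proof ((dia n A).imp (dia m A)) :=
  contrapose (mono h)

theorem dia_and_box_imp_dia_and : Proof (((dia n A).and (box n B)).imp (dia n (A.and B))) := by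
  have hB : Proof (B.imp ((A.and B).neg.imp A.neg)) := by
    refine Proof.taut fun v hb hi ha => ?_
    simp only [neg, hi, ha, hb]
    cases v A <;> cases v B <;> rfl
  have hBox : Proof ((box n B).imp ((box n (A.and B).neg).imp (box n A.neg))) :=
    (box_imp_box hB).trans k
  have taut : ∀ P Q R : GLPFormula, IsTaut ((P.imp (Q.imp R)).imp ((R.neg.and P).imp Q.neg)) := by
    intro P Q R v hb hi ha
    simp only [neg, hi, ha, hb]
    cases v P <;> cases v Q <;> cases v R <;> rfl
  exact mp (Proof.taut (taut _ _ _)) hBox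

end GLPFormula.Proof

theorem Q_imp_box_succ (n k : ℕ) (B : GLPFormula) :
    Proof ((Q n B k).imp (box (n + 1) (Q n B k))) := by
  cases k <;> exact Proof.negIntro n.lt_succ_self

theorem dia_succ_imp_Q (n k : ℕ) (B : GLPFormula) : Proof ((dia (n + 1) B).imp (Q n B k)) := by
  induction k with
  | zero => exact Proof.dia_imp_dia_of_le n.le_succ
  | succ k ih =>
    have hBox : Proof ((dia (n + 1) B).imp (box (n + 1) (Q n B k))) :=
      ih.trans (Q_imp_box_succ n k B)
    have hDia : Proof ((dia (n + 1) B).imp (dia (n + 1) (B.and (Q n B k)))) :=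
      (Proof.imp_self.imp_and hBox).trans Proof.dia_and_box_imp_dia_and
    exact hDia.trans (Proof.dia_imp_dia_of_le n.le_succ)

theorem glp_Q_lt0_diaSucc_general (n k : ℕ) (B : GLPFormula) :
    Proof ((dia (n + 1) B).imp (dia 0 (Q n B k))) :=
  ((dia_succ_imp_Q n (k + 1) B).trans (Proof.dia_imp_dia_of_le n.zero_le)).trans
    (Proof.dia_imp_dia Proof.and_imp_right)

/-- for worms B, GLP ⊢ ⟨n+1⟩B → ⟨0⟩Q^k_n(B), i.e. Q^k_n(B) <_0 ⟨n+1⟩B. -/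
theorem glp_Q_lt0_diaSucc (n k : ℕ) (B : GLPFormula) (hB : IsWorm B) :
    Proof ((dia (n + 1) B).imp (dia 0 (Q n B k))) :=
  glp_Q_lt0_diaSucc_general n k B
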